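/- Let (V,R) and (W,S) be quadratic data with R ⊆ V⊗V, S ⊆ W⊗W. Define the black product (V,R)•(W,S) = (V⊗W, S₍₂₃₎(R⊗S)) where S₍₂₃₎ : V⊗V⊗W⊗W → (V⊗W)⊗(V⊗W) swaps the middle two tensor factors, and define (V,R) ⊗̲ (W,S) = (V⊕W, R ⊕ [V,W]₊ ⊕ S) where [V,W]₊ is spanned by v⊗w + w⊗v. Then the linear map pr₁₄ : (A₁⊕A₁')⊗(B₁⊕B₁') → (A₁⊗B₁)⊕(A₁'⊗B₁') satisfies pr₁₄⊗pr₁₄ applied to the relation space of (A ⊗̲ A') • (B ⊗̲ B') lands inside the relation space of (A•B) ⊗̲ (A'•B'), for all quadratic data A, A', B, B'. -/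

import Mathlib

open TensorProduct

variable (K : Type*) [Field K]

section Defs

variable (X Y : Type*) [AddCommGroup X] [Module K X] [AddCommGroup Y] [Module K Y]

/-- `[X, Y]₊ ⊆ (X ⊕ Y) ⊗ (X ⊕ Y)`: the span of the elements `x ⊗ y + y ⊗ x`. -/
noncomputable def plusSpan : Submodule K ((X × Y) ⊗[K] (X × Y)) :=
  Submodule.span K {z | ∃ (x : X) (y : Y),
    z = (LinearMap.inl K X Y x) ⊗ₜ[K] (LinearMap.inr K X Y y)
      + (LinearMap.inr K X Y y) ⊗ₜ[K] (LinearMap.inl K X Y x)}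

/-- The relation space `R ⊕ [X,Y]₊ ⊕ S` of the quadratic datum
`(X, R) ⊗̲ (Y, S) = (X ⊕ Y, R ⊕ [X,Y]₊ ⊕ S)`. -/
noncomputable def uplusRel (R : Submodule K (X ⊗[K] X)) (S : Submodule K (Y ⊗[K] Y)) :
    Submodule K ((X × Y) ⊗[K] (X × Y)) :=
  Submodule.map (TensorProduct.map (LinearMap.inl K X Y) (LinearMap.inl K X Y)) R
    ⊔ plusSpan K X Y
    ⊔ Submodule.map (TensorProduct.map (LinearMap.inr K X Y) (LinearMap.inr K X Y)) S

/-- The subspace `R ⊗ S ⊆ (X ⊗ X) ⊗ (Y ⊗ Y)`. -/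
noncomputable def tensorOfSubmodules (R : Submodule K (X ⊗[K] X))
    (S : Submodule K (Y ⊗[K] Y)) : Submodule K ((X ⊗[K] X) ⊗[K] (Y ⊗[K] Y)) :=
  LinearMap.range (TensorProduct.map R.subtype S.subtype)

/-- The relation space `S₍₂₃₎(R ⊗ S)` of the black product
`(X, R) • (Y, S) = (X ⊗ Y, S₍₂₃₎(R ⊗ S))`, where `S₍₂₃₎` swaps the two middle tensor
factors. -/
noncomputable def blackRel (R : Submodule K (X ⊗[K] X)) (S : Submodule K (Y ⊗[K] Y)) :
    Submodule K ((X ⊗[K] Y) ⊗[K] (X ⊗[K] Y)) :=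
  Submodule.map (TensorProduct.tensorTensorTensorComm K X X Y Y).toLinearMap
    (tensorOfSubmodules K X Y R S)

end Defs

variable (A A' B B' : Type*)
  [AddCommGroup A] [Module K A] [AddCommGroup A'] [Module K A']
  [AddCommGroup B] [Module K B] [AddCommGroup B'] [Module K B']

/-- The canonical projection
`pr₁₄ : (A ⊕ A') ⊗ (B ⊕ B') → (A ⊗ B) ⊕ (A' ⊗ B')`. -/
noncomputable def pr14 : (A × A') ⊗[K] (B × B') →ₗ[K] (A ⊗[K] B) × (A' ⊗[K] B') :=
  LinearMap.prod
    (TensorProduct.map (LinearMap.fst K A A') (LinearMap.fst K B B'))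
    (TensorProduct.map (LinearMap.snd K A A') (LinearMap.snd K B B'))


/-! The square of `A₁ ⊕ A₁'` splits into four blocks, and `(pr₁₄ ⊗ pr₁₄) ∘ S₍₂₃₎` pairs each
block of the `A`-side only with the same block of the `B`-side, because `pr₁₄` kills
`A₁ ⊗ B₁'` and `A₁' ⊗ B₁`. Hence `R(A) ⊗ R(B)` lands in `S₍₂₃₎(R(A) ⊗ R(B))`, `R(A') ⊗ R(B')` in
`S₍₂₃₎(R(A') ⊗ R(B'))`, `[A₁,A₁']₊ ⊗ [B₁,B₁']₊` in `[A₁ ⊗ B₁, A₁' ⊗ B₁']₊`, and the six mixed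
products vanish. -/

section Naturality

variable {K} {M N P Q M' N' P' Q' V W : Type*}
  [AddCommGroup M] [Module K M] [AddCommGroup N] [Module K N]
  [AddCommGroup P] [Module K P] [AddCommGroup Q] [Module K Q]
  [AddCommGroup M'] [Module K M'] [AddCommGroup N'] [Module K N']
  [AddCommGroup P'] [Module K P'] [AddCommGroup Q'] [Module K Q']
  [AddCommGroup V] [Module K V] [AddCommGroup W] [Module K W]

theorem map_tensorTensorTensorComm_map_tmul_map (p : M' ⊗[K] P' →ₗ[K] V)
    (q : N' ⊗[K] Q' →ₗ[K] W) (f : M →ₗ[K] M') (g : N →ₗ[K] N') (h : P →ₗ[K] P')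
    (j : Q →ₗ[K] Q') (x : M ⊗[K] N) (y : P ⊗[K] Q) :
    map p q (tensorTensorTensorComm K M' N' P' Q' (map f g x ⊗ₜ map h j y))
      = map (p ∘ₗ map f h) (q ∘ₗ map g j) (tensorTensorTensorComm K M N P Q (x ⊗ₜ y)) := by
  rw [map_comp, LinearMap.comp_apply]
  exact congrArg (map p q) <| LinearMap.congr_fun
    (tensorTensorTensorComm_comp_map (f := f) (g := g) (h := h) (j := j)) (x ⊗ₜ y)

theorem tensorTensorTensorComm_comm_tmul_comm (x : M ⊗[K] N) (y : P ⊗[K] Q) :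
    tensorTensorTensorComm K N M Q P (TensorProduct.comm K M N x ⊗ₜ TensorProduct.comm K P Q y)
      = TensorProduct.comm K (M ⊗[K] P) (N ⊗[K] Q)
          (tensorTensorTensorComm K M N P Q (x ⊗ₜ y)) := by
  have : (tensorTensorTensorComm K N M Q P).toLinearMap
        ∘ₗ map (TensorProduct.comm K M N).toLinearMap (TensorProduct.comm K P Q).toLinearMap
      = (TensorProduct.comm K (M ⊗[K] P) (N ⊗[K] Q)).toLinearMap
        ∘ₗ (tensorTensorTensorComm K M N P Q).toLinearMap :=
    ext_fourfold' fun _ _ _ _ => rfl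
  exact LinearMap.congr_fun this (x ⊗ₜ y)

end Naturality

section QuadraticData

variable {K} {X Y : Type*} [AddCommGroup X] [Module K X] [AddCommGroup Y] [Module K Y]

variable (K X Y) in
noncomputable def plusMap : X ⊗[K] Y →ₗ[K] (X × Y) ⊗[K] (X × Y) :=
  map (LinearMap.inl K X Y) (LinearMap.inr K X Y)
    + map (LinearMap.inr K X Y) (LinearMap.inl K X Y) ∘ₗ (TensorProduct.comm K X Y)

theorem plusSpan_eq_range_plusMap : plusSpan K X Y = LinearMap.range (plusMap K X Y) := by
  rw [LinearMap.range_eq_map, ← span_tmul_eq_top, Submodule.map_span, plusSpan]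
  congr 1
  ext z
  simp [plusMap, eq_comm]

theorem mem_uplusRel_iff {R : Submodule K (X ⊗[K] X)} {S : Submodule K (Y ⊗[K] Y)}
    {z : (X × Y) ⊗[K] (X × Y)} :
    z ∈ uplusRel K X Y R S ↔ ∃ x ∈ R, ∃ u, ∃ y ∈ S,
      map (LinearMap.inl K X Y) (LinearMap.inl K X Y) x + plusMap K X Y u
        + map (LinearMap.inr K X Y) (LinearMap.inr K X Y) y = z := by
  simp only [uplusRel, plusSpan_eq_range_plusMap, Submodule.mem_sup, Submodule.mem_map,
    LinearMap.mem_range]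
  aesop

theorem map_tensorOfSubmodules_le_iff {M : Type*} [AddCommGroup M] [Module K M]
    {R : Submodule K (X ⊗[K] X)} {S : Submodule K (Y ⊗[K] Y)}
    (f : (X ⊗[K] X) ⊗[K] (Y ⊗[K] Y) →ₗ[K] M) (T : Submodule K M) :
    (tensorOfSubmodules K X Y R S).map f ≤ T ↔ ∀ x ∈ R, ∀ y ∈ S, f (x ⊗ₜ y) ∈ T := by
  rw [tensorOfSubmodules, ← mapIncl, range_mapIncl, Submodule.map_map₂, Submodule.map₂_le]
  rfl

theorem tensorTensorTensorComm_tmul_mem_blackRel {R : Submodule K (X ⊗[K] X)}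
    {S : Submodule K (Y ⊗[K] Y)} {x : X ⊗[K] X} {y : Y ⊗[K] Y} (hx : x ∈ R) (hy : y ∈ S) :
    tensorTensorTensorComm K X X Y Y (x ⊗ₜ y) ∈ blackRel K X Y R S :=
  Submodule.mem_map_of_mem ⟨(⟨x, hx⟩ : R) ⊗ₜ (⟨y, hy⟩ : S), rfl⟩

end QuadraticData

section Pr14

variable {K A A' B B'}

theorem pr14_comp_map_inl_inl :
    pr14 K A A' B B' ∘ₗ map (LinearMap.inl K A A') (LinearMap.inl K B B')
      = LinearMap.inl K (A ⊗[K] B) (A' ⊗[K] B') := by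
  ext <;> simp [pr14]

theorem pr14_comp_map_inr_inr :
    pr14 K A A' B B' ∘ₗ map (LinearMap.inr K A A') (LinearMap.inr K B B')
      = LinearMap.inr K (A ⊗[K] B) (A' ⊗[K] B') := by
  ext <;> simp [pr14]

theorem pr14_comp_map_inl_inr :
    pr14 K A A' B B' ∘ₗ map (LinearMap.inl K A A') (LinearMap.inr K B B') = 0 := by
  ext <;> simp [pr14]

theorem pr14_comp_map_inr_inl :
    pr14 K A A' B B' ∘ₗ map (LinearMap.inr K A A') (LinearMap.inl K B B') = 0 := by
  ext <;> simp [pr14]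

theorem map_pr14_tensorTensorTensorComm_blocks (x : A ⊗[K] A) (u : A ⊗[K] A') (x' : A' ⊗[K] A')
    (y : B ⊗[K] B) (v : B ⊗[K] B') (y' : B' ⊗[K] B') :
    map (pr14 K A A' B B') (pr14 K A A' B B')
      (tensorTensorTensorComm K (A × A') (A × A') (B × B') (B × B')
        ((map (LinearMap.inl K A A') (LinearMap.inl K A A') x + plusMap K A A' u
            + map (LinearMap.inr K A A') (LinearMap.inr K A A') x') ⊗ₜ
          (map (LinearMap.inl K B B') (LinearMap.inl K B B') y + plusMap K B B' v
            + map (LinearMap.inr K B B') (LinearMap.inr K B B') y')))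
      = map (LinearMap.inl K (A ⊗[K] B) (A' ⊗[K] B')) (LinearMap.inl K (A ⊗[K] B) (A' ⊗[K] B'))
            (tensorTensorTensorComm K A A B B (x ⊗ₜ y))
          + plusMap K (A ⊗[K] B) (A' ⊗[K] B') (tensorTensorTensorComm K A A' B B' (u ⊗ₜ v))
          + map (LinearMap.inr K (A ⊗[K] B) (A' ⊗[K] B'))
              (LinearMap.inr K (A ⊗[K] B) (A' ⊗[K] B'))
            (tensorTensorTensorComm K A' A' B' B' (x' ⊗ₜ y')) := by
  simp only [plusMap, LinearMap.add_apply, LinearMap.comp_apply, LinearEquiv.coe_coe,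
    add_tmul, tmul_add, map_add, map_tensorTensorTensorComm_map_tmul_map,
    tensorTensorTensorComm_comm_tmul_comm, pr14_comp_map_inl_inl, pr14_comp_map_inr_inr,
    pr14_comp_map_inl_inr, pr14_comp_map_inr_inl, map_zero_left, map_zero_right,
    LinearMap.zero_apply, add_zero, zero_add]

end Pr14

/-- For quadratic data `A = (A₁, R(A))`, `A' = (A₁', R(A'))`,
`B = (B₁, R(B))`, `B' = (B₁', R(B'))`, the map `pr₁₄ ⊗ pr₁₄` applied to the relation space of
`(A ⊗̲ A') • (B ⊗̲ B')`, namely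
`S₍₂₃₎((R(A) ⊕ [A₁,A₁']₊ ⊕ R(A')) ⊗ (R(B) ⊕ [B₁,B₁']₊ ⊕ R(B')))`,
lands inside the relation space of `(A • B) ⊗̲ (A' • B')`, namely
`S₍₂₃₎(R(A) ⊗ R(B)) ⊕ [A₁⊗B₁, A₁'⊗B₁']₊ ⊕ S₍₂₃₎(R(A') ⊗ R(B'))`. -/
theorem pr14_interchange_on_relations
    (RA : Submodule K (A ⊗[K] A)) (RA' : Submodule K (A' ⊗[K] A'))
    (RB : Submodule K (B ⊗[K] B)) (RB' : Submodule K (B' ⊗[K] B')) :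
    Submodule.map
      (TensorProduct.map (pr14 K A A' B B') (pr14 K A A' B B'))
      (Submodule.map
        (TensorProduct.tensorTensorTensorComm K (A × A') (A × A') (B × B') (B × B')).toLinearMap
        (tensorOfSubmodules K ((A × A')) ((B × B'))
          (uplusRel K A A' RA RA') (uplusRel K B B' RB RB')))
      ≤ uplusRel K (A ⊗[K] B) (A' ⊗[K] B')
          (blackRel K A B RA RB) (blackRel K A' B' RA' RB') := by
  rw [← Submodule.map_comp, map_tensorOfSubmodules_le_iff]
  intro r hr s hs
  obtain ⟨x, hx, u, x', hx', rfl⟩ := mem_uplusRel_iff.1 hr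
  obtain ⟨y, hy, v, y', hy', rfl⟩ := mem_uplusRel_iff.1 hs
  rw [LinearMap.comp_apply, LinearEquiv.coe_coe, map_pr14_tensorTensorTensorComm_blocks]
  exact mem_uplusRel_iff.2 ⟨_, tensorTensorTensorComm_tmul_mem_blackRel hx hy, _, _,
    tensorTensorTensorComm_tmul_mem_blackRel hx' hy', rfl⟩
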